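/- Let X be an uncountable Polish space that is an abelian topological group, and let I be a proper σ-ideal of subsets of X with Borel base containing all singletons, which is invariant under translations and under the map x ↦ -x. If I has the Steinhaus property, i.e., for any two Borel sets A, B ∉ I the complex sum A + B = {a + b : a ∈ A, b ∈ B} contains a nonempty open set, then cov_h(I) = cov(I). -/

import Mathlib

open MeasureTheory Set Pointwise

/-- `B` is a Borel subset of `X`. -/
def IsBorel {X : Type} [TopologicalSpace X] (B : Set X) : Prop :=
  MeasurableSet[borel X] B

/-- `I` is a σ-ideal of subsets of `X` (closed under subsets and countable unions),
containing all singletons, with a Borel base. -/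
def IsNiceIdeal {X : Type} [TopologicalSpace X] (I : Set (Set X)) : Prop :=
  (∀ A B : Set X, A ⊆ B → B ∈ I → A ∈ I) ∧
  (∀ f : ℕ → Set X, (∀ n, f n ∈ I) → (⋃ n, f n) ∈ I) ∧
  (∀ x : X, ({x} : Set X) ∈ I) ∧
  (∀ A ∈ I, ∃ B ∈ I, IsBorel B ∧ A ⊆ B)

/-- `cov_h(I)`: the least cardinality of a subfamily of `I` whose union contains
some Borel set not in `I`. -/
noncomputable def covh {X : Type} [TopologicalSpace X] (I : Set (Set X)) : Cardinal.{0} :=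
  sInf {c : Cardinal.{0} | ∃ 𝒞 : Set (Set X), 𝒞 ⊆ I ∧
    (∃ B : Set X, IsBorel B ∧ B ∉ I ∧ B ⊆ ⋃₀ 𝒞) ∧ c = Cardinal.mk 𝒞}

/-- `cov(I)`: the least cardinality of a subfamily of `I` covering `X`. -/
noncomputable def covI {X : Type} (I : Set (Set X)) : Cardinal.{0} :=
  sInf {c : Cardinal.{0} | ∃ 𝒞 : Set (Set X), 𝒞 ⊆ I ∧ ⋃₀ 𝒞 = Set.univ ∧ c = Cardinal.mk 𝒞}

/-!
For a Borel set `B ∉ I` and a countable dense `D ⊆ X`, the Steinhaus property puts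
`(D + B)ᶜ` into `I`: otherwise `(D + B)ᶜ + (-B)` contains a nonempty open set, hence some
`d ∈ D`, and `d = c - b` gives `c = d + b ∈ D + B`. So if `𝒞 ⊆ I` covers `B`, the translates
`d + C` (`d ∈ D`, `C ∈ 𝒞`) together with `(D + B)ᶜ` cover `X`; as `I` is a σ-ideal, `𝒞` is
infinite and this cover has at most `#𝒞` members.
-/

namespace IsNiceIdeal

variable {X : Type} [TopologicalSpace X] {I : Set (Set X)}

theorem mem_of_subset (hI : IsNiceIdeal I) {A B : Set X} (hAB : A ⊆ B) (hB : B ∈ I) : A ∈ I :=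
  hI.1 A B hAB hB

theorem singleton_mem (hI : IsNiceIdeal I) (x : X) : {x} ∈ I :=
  hI.2.2.1 x

theorem empty_mem [Nonempty X] (hI : IsNiceIdeal I) : ∅ ∈ I :=
  hI.mem_of_subset (empty_subset _) (hI.singleton_mem (Classical.arbitrary X))

theorem sUnion_mem [Nonempty X] (hI : IsNiceIdeal I) {𝒞 : Set (Set X)} (h𝒞I : 𝒞 ⊆ I)
    (h𝒞 : 𝒞.Countable) : ⋃₀ 𝒞 ∈ I := by
  rcases 𝒞.eq_empty_or_nonempty with rfl | hne
  · simpa using hI.empty_mem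
  · obtain ⟨f, rfl⟩ := h𝒞.exists_eq_range hne
    rw [sUnion_range]
    exact hI.2.1 f fun n => h𝒞I ⟨n, rfl⟩

theorem aleph0_le_mk_of_subset_sUnion [Nonempty X] (hI : IsNiceIdeal I) {𝒞 : Set (Set X)}
    (h𝒞I : 𝒞 ⊆ I) {B : Set X} (hB : B ∉ I) (hB𝒞 : B ⊆ ⋃₀ 𝒞) :
    Cardinal.aleph0 ≤ Cardinal.mk 𝒞 := by
  by_contra! h
  exact hB (hI.mem_of_subset hB𝒞 (hI.sUnion_mem h𝒞I (Cardinal.mk_le_aleph0_iff.1 h.le)))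

end IsNiceIdeal

section Borel

variable {X : Type} [TopologicalSpace X]

theorem isBorel_univ : IsBorel (univ : Set X) := by
  borelize X
  exact MeasurableSet.univ

theorem IsBorel.compl {B : Set X} (hB : IsBorel B) : IsBorel Bᶜ := by
  borelize X
  exact MeasurableSet.compl hB

theorem IsBorel.neg [InvolutiveNeg X] [ContinuousNeg X] {B : Set X} (hB : IsBorel B) :
    IsBorel (-B) := by
  borelize X
  exact MeasurableSet.neg hB

theorem IsBorel.countable_add [AddGroup X] [ContinuousAdd X] {D B : Set X} (hD : D.Countable)
    (hB : IsBorel B) : IsBorel (D + B) := by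
  borelize X
  rw [← iUnion_add_left_image]
  exact MeasurableSet.biUnion hD fun d _ => MeasurableSet.const_vadd hB d

end Borel

section Covers

variable {X : Type} {I : Set (Set X)}

theorem covI_le_mk {𝒞 : Set (Set X)} (h𝒞I : 𝒞 ⊆ I) (h𝒞 : ⋃₀ 𝒞 = univ) :
    covI I ≤ Cardinal.mk 𝒞 :=
  csInf_le (OrderBot.bddBelow _) ⟨𝒞, h𝒞I, h𝒞, rfl⟩

theorem covh_le_mk [TopologicalSpace X] {𝒞 : Set (Set X)} (h𝒞I : 𝒞 ⊆ I) {B : Set X}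
    (hB : IsBorel B) (hBI : B ∉ I) (hB𝒞 : B ⊆ ⋃₀ 𝒞) : covh I ≤ Cardinal.mk 𝒞 :=
  csInf_le (OrderBot.bddBelow _) ⟨𝒞, h𝒞I, ⟨B, hB, hBI, hB𝒞⟩, rfl⟩

theorem exists_covI_eq (hsingleton : ∀ x : X, {x} ∈ I) :
    ∃ 𝒞 ⊆ I, ⋃₀ 𝒞 = univ ∧ covI I = Cardinal.mk 𝒞 := by
  have hne : {c | ∃ 𝒞 ⊆ I, ⋃₀ 𝒞 = univ ∧ c = Cardinal.mk 𝒞}.Nonempty :=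
    ⟨_, range ({·}), range_subset_iff.2 hsingleton, by rw [sUnion_range, iUnion_of_singleton], rfl⟩
  exact csInf_mem hne

theorem exists_covh_eq [TopologicalSpace X] {𝒞 : Set (Set X)} (h𝒞I : 𝒞 ⊆ I) {B : Set X}
    (hB : IsBorel B) (hBI : B ∉ I) (hB𝒞 : B ⊆ ⋃₀ 𝒞) : ∃ 𝒞' ⊆ I, (∃ B', IsBorel B' ∧ B' ∉ I ∧ B' ⊆ ⋃₀ 𝒞') ∧
      covh I = Cardinal.mk 𝒞' :=
  csInf_mem (s := {c | ∃ 𝒞' ⊆ I, (∃ B', IsBorel B' ∧ B' ∉ I ∧ B' ⊆ ⋃₀ 𝒞') ∧ c = Cardinal.mk 𝒞'})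
    ⟨_, 𝒞, h𝒞I, ⟨B, hB, hBI, hB𝒞⟩, rfl⟩

end Covers

section Translates

variable {X : Type} {I : Set (Set X)}

theorem compl_add_mem_of_steinhaus [TopologicalSpace X] [AddCommGroup X]
    [IsTopologicalAddGroup X] (hneg : ∀ A ∈ I, (fun x : X => -x) '' A ∈ I)
    (hSt : ∀ A B : Set X, IsBorel A → A ∉ I → IsBorel B → B ∉ I →
      ∃ U : Set X, IsOpen U ∧ U.Nonempty ∧ U ⊆ A + B)
    {D : Set X} (hDc : D.Countable) (hD : Dense D) {B : Set X} (hB : IsBorel B) (hBI : B ∉ I) :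
    (D + B)ᶜ ∈ I := by
  by_contra hDB
  have hnegB : -B ∉ I := fun h => hBI (by simpa [image_neg_eq_neg] using hneg _ h)
  obtain ⟨U, hU, hUne, hUsub⟩ := hSt _ _ (hB.countable_add hDc).compl hDB hB.neg hnegB
  obtain ⟨d, hdU, hdD⟩ := hD.inter_open_nonempty U hU hUne
  obtain ⟨c, hc, b', hb', rfl⟩ := hUsub hdU
  exact hc ⟨c + b', hdD, -b', hb', add_neg_cancel_right c b'⟩

theorem covI_le_mk_of_compl_add_mem [Add X]
    (htrans : ∀ A ∈ I, ∀ g : X, (fun x => g + x) '' A ∈ I)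
    {𝒞 : Set (Set X)} (h𝒞I : 𝒞 ⊆ I) (h𝒞 : Cardinal.aleph0 ≤ Cardinal.mk 𝒞)
    {D : Set X} (hDc : D.Countable) {B : Set X} (hB𝒞 : B ⊆ ⋃₀ 𝒞) (hDB : (D + B)ᶜ ∈ I) :
    covI I ≤ Cardinal.mk 𝒞 := by
  let 𝒯 := image2 (fun d C => (d + ·) '' C) D 𝒞
  have h𝒯I : insert (D + B)ᶜ 𝒯 ⊆ I := by
    rintro _ (rfl | ⟨d, -, C, hC, rfl⟩)
    exacts [hDB, htrans C (h𝒞I hC) d]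
  have h𝒯 : ⋃₀ insert (D + B)ᶜ 𝒯 = univ := by
    refine eq_univ_of_forall fun x => ?_
    by_cases hx : x ∈ D + B
    · obtain ⟨d, hd, b, hb, rfl⟩ := hx
      obtain ⟨C, hC, hbC⟩ := hB𝒞 hb
      exact ⟨_, mem_insert_of_mem _ ⟨d, hd, C, hC, rfl⟩, b, hbC, rfl⟩
    · exact ⟨_, mem_insert _ _, hx⟩
  calc covI I ≤ Cardinal.mk ↥(insert (D + B)ᶜ 𝒯) := covI_le_mk h𝒯I h𝒯
    _ ≤ Cardinal.mk D * Cardinal.mk 𝒞 + 1 :=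
      Cardinal.mk_insert_le.trans (by gcongr; exact Cardinal.mk_image2_le)
    _ ≤ Cardinal.mk 𝒞 :=
      Cardinal.add_le_of_le h𝒞 (Cardinal.mul_le_of_le h𝒞 (hDc.le_aleph0.trans h𝒞) le_rfl)
        (Cardinal.one_le_aleph0.trans h𝒞)

end Translates

/-- If `X` is an uncountable Polish abelian topological group and `I` is a proper,
translation- and negation-invariant σ-ideal with Borel base having the Steinhaus
property, then `cov_h(I) = cov(I)`. -/
theorem steinhaus_cov {X : Type} [TopologicalSpace X] [PolishSpace X] [Uncountable X]
    [AddCommGroup X] [IsTopologicalAddGroup X]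
    (I : Set (Set X)) (hI : IsNiceIdeal I)
    (hproper : (Set.univ : Set X) ∉ I)
    (htrans : ∀ A ∈ I, ∀ g : X, (fun x => g + x) '' A ∈ I)
    (hneg : ∀ A ∈ I, (fun x : X => -x) '' A ∈ I)
    (hSt : ∀ A B : Set X, IsBorel A → A ∉ I → IsBorel B → B ∉ I →
      ∃ U : Set X, IsOpen U ∧ U.Nonempty ∧ U ⊆ A + B) :
    covh I = covI I := by
  obtain ⟨𝒞, h𝒞I, h𝒞, hcov⟩ := exists_covI_eq hI.singleton_mem
  have huniv : univ ⊆ ⋃₀ 𝒞 := h𝒞.symm.subset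
  obtain ⟨𝒞', h𝒞'I, ⟨B, hB, hBI, hB𝒞'⟩, hcovh⟩ := exists_covh_eq h𝒞I isBorel_univ hproper huniv
  obtain ⟨D, hDc, hD⟩ := TopologicalSpace.exists_countable_dense X
  refine le_antisymm (hcov ▸ covh_le_mk h𝒞I isBorel_univ hproper huniv) (hcovh ▸ ?_)
  exact covI_le_mk_of_compl_add_mem htrans h𝒞'I (hI.aleph0_le_mk_of_subset_sUnion h𝒞'I hBI hB𝒞')
    hDc hB𝒞' (compl_add_mem_of_steinhaus hneg hSt hDc hD hB hBI)
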